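/- arXiv:2510.08376 — 7 statements merged into one kernel-verified Lean document; each statement's English description precedes it below -/
import Mathlib

section
/- The center of G = A(n,θ) (for n > 1 and θ a generator of the Galois group) is exactly the set of elements (0,b) with b ∈ F_{2^n}. -/
noncomputable section

abbrev Fq (n : ℕ) : Type := GaloisField 2 n

instance (n : ℕ) : Fintype (Fq n) := Fintype.ofFinite _

@[ext] structure SuzukiA (n : ℕ) (θ : Fq n ≃+* Fq n) where
  a : Fq n
  b : Fq n

namespace SuzukiA

variable {n : ℕ} {θ : Fq n ≃+* Fq n}

instance : Mul (SuzukiA n θ) := ⟨fun x y => ⟨x.a + y.a, x.b + y.b + x.a * θ y.a⟩⟩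
instance : One (SuzukiA n θ) := ⟨⟨0, 0⟩⟩
instance : Inv (SuzukiA n θ) := ⟨fun x => ⟨x.a, x.b + x.a * θ x.a⟩⟩

theorem mul_def (x y : SuzukiA n θ) :
    x * y = ⟨x.a + y.a, x.b + y.b + x.a * θ y.a⟩ := rfl

@[simp] theorem one_a : (1 : SuzukiA n θ).a = 0 := rfl
@[simp] theorem one_b : (1 : SuzukiA n θ).b = 0 := rfl

instance : Group (SuzukiA n θ) where
  mul_assoc x y z := by ext <;> simp [mul_def, map_add] <;> ring
  one_mul x := by ext <;> simp [mul_def]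
  mul_one x := by ext <;> simp [mul_def]
  inv_mul_cancel x := by
    have h2 : (2 : Fq n) = 0 := by
      have := CharP.cast_eq_zero (Fq n) 2
      exact_mod_cast this
    show (⟨x.a, x.b + x.a * θ x.a⟩ * x : SuzukiA n θ) = 1
    ext
    · show x.a + x.a = 0
      linear_combination x.a * h2
    · show x.b + x.a * θ x.a + x.b + x.a * θ x.a = 0
      linear_combination (x.b + x.a * θ x.a) * h2

instance : Fintype (SuzukiA n θ) :=
  Fintype.ofEquiv (Fq n × Fq n)
    { toFun := fun p => ⟨p.1, p.2⟩
      invFun := fun x => (x.a, x.b)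
      left_inv := fun _ => rfl
      right_inv := fun _ => rfl }

end SuzukiA

/-! An element `(a, b)` commutes with every `(c, 0)` iff `a * θ c = c * θ a` for all `c`. For
`a ≠ 0` this gives `θ a = a` (take `c = 1`) and then `θ = 1`. But a generator of the automorphism
group of `𝔽_{2^n}`, `n > 1`, is not `1`, since the Frobenius has order `n`. -/

theorem RingEquiv.nontrivial_of_one_lt_finrank {K L : Type*} [Field K] [Field L] [Finite L]
    [Algebra K L] (h : 1 < Module.finrank K L) : Nontrivial (L ≃+* L) := by
  have := Finite.of_injective _ (algebraMap K L).injective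
  have := Fintype.ofFinite K
  have hfrob : FiniteField.frobeniusAlgEquivOfAlgebraic K L ≠ 1 := fun h1 ↦ by
    have := FiniteField.orderOf_frobeniusAlgEquivOfAlgebraic K L
    rw [h1, orderOf_one] at this
    omega
  exact ⟨_, 1, fun he ↦ hfrob (AlgEquiv.coe_ringEquiv_injective he)⟩

theorem RingEquiv.eq_one_of_forall_mul_apply_eq {K : Type*} [Field K] {σ : K ≃+* K} {a : K}
    (ha : a ≠ 0) (h : ∀ c, a * σ c = c * σ a) : σ = 1 := by
  have hσa : σ a = a := by simpa using (h 1).symm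
  ext c
  exact mul_left_cancel₀ ha (by rw [h c, hσa, mul_comm]; rfl)

theorem Subgroup.ne_one_of_forall_mem_zpowers {G : Type*} [Group G] [Nontrivial G] {g : G}
    (hg : ∀ x, x ∈ zpowers g) : g ≠ 1 := by
  rintro rfl
  obtain ⟨x, hx⟩ := exists_ne (1 : G)
  simpa [hx] using hg x

namespace SuzukiA

variable {n : ℕ} {θ : Fq n ≃+* Fq n}

theorem mul_comm_iff {x y : SuzukiA n θ} : x * y = y * x ↔ x.a * θ y.a = y.a * θ x.a := by
  simp only [mul_def, mk.injEq, add_comm x.a, add_comm x.b, true_and, add_right_inj]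

theorem mem_center_iff {x : SuzukiA n θ} :
    x ∈ Subgroup.center (SuzukiA n θ) ↔ ∀ c, x.a * θ c = c * θ x.a := by
  rw [Subgroup.mem_center_iff]
  exact ⟨fun h c ↦ mul_comm_iff.mp (h ⟨c, 0⟩).symm, fun h y ↦ (mul_comm_iff.mpr (h y.a)).symm⟩

theorem mem_center_iff_a_eq_zero (hθ : θ ≠ 1) {x : SuzukiA n θ} :
    x ∈ Subgroup.center (SuzukiA n θ) ↔ x.a = 0 := by
  rw [mem_center_iff]
  refine ⟨fun h ↦ ?_, fun h c ↦ by simp [h]⟩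
  by_contra ha
  exact hθ (RingEquiv.eq_one_of_forall_mul_apply_eq ha h)

end SuzukiA

open SuzukiA in
theorem stmt3_general (n : ℕ) (hn : 1 < n) (θ : Fq n ≃+* Fq n)
    (hθ : ∀ σ : Fq n ≃+* Fq n, σ ∈ Subgroup.zpowers θ) :
    ∀ x : SuzukiA n θ, x ∈ Subgroup.center (SuzukiA n θ) ↔ x.a = 0 := by
  have : Nontrivial (Fq n ≃+* Fq n) :=
    RingEquiv.nontrivial_of_one_lt_finrank (K := ZMod 2) (by rwa [GaloisField.finrank 2 (by omega)])
  have hθ1 : θ ≠ 1 := Subgroup.ne_one_of_forall_mem_zpowers hθ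
  exact fun x ↦ mem_center_iff_a_eq_zero hθ1

open SuzukiA in
theorem stmt3 (n : ℕ) (hn : 1 < n) (hodd : Odd n) (θ : Fq n ≃+* Fq n)
    (hθ : ∀ σ : Fq n ≃+* Fq n, σ ∈ Subgroup.zpowers θ) :
    ∀ x : SuzukiA n θ, x ∈ Subgroup.center (SuzukiA n θ) ↔ x.a = 0 :=
  stmt3_general n hn θ hθ
end
end

section
/- If λ generates F_{2^n}^×, the automorphism ξ(a,b) = (λa, λ^{1+θ}b) generates a cyclic group of automorphisms of G = A(n,θ) acting regularly (simply transitively) on the set of nontrivial central elements of G. -/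
/-!
Since `θ` has odd order `n = |Gal(F_{2^n}/F_2)|`, `u ↦ u * θ u` has trivial kernel on
`F_{2^n}ˣ`: `u * θ u = 1` gives `θ (θ u) = u`, hence `θ u = u` and `u ^ 2 = 1`. So it is a
bijection and `μ = λ ^ (1 + θ)` again generates `F_{2^n}ˣ`. As `θ ≠ 1`, the nontrivial central
elements are the `(0, b)` with `b ≠ 0`, and `ξ` acts on them as `b ↦ μ * b`; so `ξ ^ k` carries
`(0, b)` to `(0, c)` for exactly one `k < 2 ^ n - 1`, the discrete logarithm of `c / b` to the
base `μ`.
-/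

noncomputable section

theorem existsUnique_lt_orderOf_pow_eq {G : Type*} [Group G] {g w : G} (hg : IsOfFinOrder g)
    (hw : w ∈ Subgroup.zpowers g) : ∃! k : ℕ, k < orderOf g ∧ g ^ k = w := by
  obtain ⟨k, rfl⟩ := Submonoid.mem_powers_iff _ _ |>.mp (hg.mem_powers_iff_mem_zpowers.mpr hw)
  refine ⟨k % orderOf g, ⟨Nat.mod_lt _ hg.orderOf_pos, pow_mod_orderOf g k⟩, ?_⟩
  rintro j ⟨hj, hjk⟩
  exact pow_injOn_Iio_orderOf hj (Nat.mod_lt _ hg.orderOf_pos)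
    (hjk.trans (pow_mod_orderOf g k).symm)

theorem MonoidHom.forall_mem_zpowers_map {G H : Type*} [Group G] [Group H] {f : G →* H}
    (hf : Function.Surjective f) {g : G} (hg : ∀ x, x ∈ Subgroup.zpowers g) (y : H) :
    y ∈ Subgroup.zpowers (f g) := by
  obtain ⟨x, rfl⟩ := hf y
  rw [← MonoidHom.map_zpowers]
  exact Subgroup.mem_map_of_mem f (hg x)

theorem MulAction.smul_eq_of_sq_smul_eq {G α : Type*} [Group G] [MulAction G α] {g : G}
    (hg : Odd (orderOf g)) {a : α} (h : g ^ 2 • a = a) : g • a = a := by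
  obtain ⟨m, hm⟩ := hg
  have hg_mem : g ∈ Subgroup.zpowers (g ^ 2) := Subgroup.mem_zpowers_iff.mpr
    ⟨(m + 1 : ℕ), by
      rw [zpow_natCast, ← pow_mul, show 2 * (m + 1) = orderOf g + 1 by omega, pow_succ,
        pow_orderOf_eq_one, one_mul]⟩
  exact (Subgroup.zpowers_le.mpr h : _ ≤ MulAction.stabilizer G a) hg_mem

def ringEquivEquivZModAlgEquiv (p : ℕ) (R S : Type*) [Ring R] [Ring S] [Algebra (ZMod p) R]
    [Algebra (ZMod p) S] : (R ≃+* S) ≃ (R ≃ₐ[ZMod p] S) where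
  toFun σ := AlgEquiv.ofRingEquiv (f := σ) fun x =>
    RingHom.congr_fun (Subsingleton.elim ((σ : R →+* S).comp (algebraMap (ZMod p) R)) _) x
  invFun σ := σ.toRingEquiv

theorem GaloisField.card_ringEquiv (p : ℕ) [Fact p.Prime] {n : ℕ} (hn : n ≠ 0) :
    Nat.card (GaloisField p n ≃+* GaloisField p n) = n := by
  rw [Nat.card_congr (ringEquivEquivZModAlgEquiv p _ _), IsGalois.card_aut_eq_finrank,
    GaloisField.finrank p hn]

/-- `twistNorm θ u` is `u ^ (1 + θ)` in the paper's exponential notation. -/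
def twistNorm {R : Type*} [CommRing R] (θ : R ≃+* R) : Rˣ →* Rˣ where
  toFun u := u * Units.map (θ : R →* R) u
  map_one' := by simp
  map_mul' u v := by simp [mul_mul_mul_comm]

theorem twistNorm_injective {R : Type*} [CommRing R] [NoZeroDivisors R] [CharP R 2]
    {θ : R ≃+* R} (hθ : Odd (orderOf θ)) : Function.Injective (twistNorm θ) := by
  rw [injective_iff_map_eq_one]
  intro u hu
  have hmul : (u : R) * θ u = 1 := congrArg Units.val hu
  have hθθ : θ (θ u) = u :=
    (left_inv_eq_right_inv hmul (by rw [← map_mul, hmul, map_one])).symm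
  have hfix : θ u = u := MulAction.smul_eq_of_sq_smul_eq (a := (u : R)) hθ hθθ
  have hsq : (u : R) ^ 2 = 1 ^ 2 := by rw [sq, one_pow, ← hmul, hfix]
  exact Units.ext (CharTwo.sq_injective hsq)

namespace SuzukiA

variable {n : ℕ} {θ : Fq n ≃+* Fq n}

theorem a_eq_zero_of_mem_center (hθ : θ ≠ 1) {x : SuzukiA n θ}
    (hx : x ∈ Subgroup.center (SuzukiA n θ)) : x.a = 0 := by
  have hcomm (c : Fq n) : x.a * θ c = c * θ x.a := by
    simpa [mul_def, add_comm] using congrArg b (Subgroup.mem_center_iff.mp hx ⟨c, 0⟩).symm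
  have hfix : θ x.a = x.a := by simpa using (hcomm 1).symm
  by_contra hxa
  exact hθ <| RingEquiv.ext fun c => mul_left_cancel₀ hxa (by rw [hcomm, hfix, mul_comm]; rfl)

variable (θ) in
/-- `scaleHom θ λ` is the paper's `ξ`. -/
def scaleHom : (Fq n)ˣ →* MulAut (SuzukiA n θ) where
  toFun u :=
    { toFun x := ⟨u * x.a, twistNorm θ u * x.b⟩
      invFun x := ⟨(u⁻¹ : (Fq n)ˣ) * x.a, twistNorm θ u⁻¹ * x.b⟩
      left_inv x := by
        ext <;> simp only [← mul_assoc, ← Units.val_mul, ← map_mul, inv_mul_cancel, map_one,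
          Units.val_one, one_mul]
      right_inv x := by
        ext <;> simp only [← mul_assoc, ← Units.val_mul, ← map_mul, mul_inv_cancel, map_one,
          Units.val_one, one_mul]
      map_mul' x y := by ext <;> simp [mul_def, twistNorm, map_mul] <;> ring }
  map_one' := by ext <;> simp
  map_mul' u v := by ext <;> simp [mul_assoc]

theorem scaleHom_apply_eq_iff {u : (Fq n)ˣ} {y z : SuzukiA n θ} (hya : y.a = 0) (hza : z.a = 0)
    (hyb : y.b ≠ 0) (hzb : z.b ≠ 0) :
    scaleHom θ u y = z ↔ twistNorm θ u = Units.mk0 z.b hzb / Units.mk0 y.b hyb := by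
  rw [eq_div_iff_mul_eq', Units.ext_iff, SuzukiA.ext_iff]
  simp [scaleHom, twistNorm, hya, hza]

end SuzukiA

open SuzukiA in
theorem stmt6 (n : ℕ) (hn : 1 < n) (hodd : Odd n) (θ : Fq n ≃+* Fq n)
    (hθ : ∀ σ : Fq n ≃+* Fq n, σ ∈ Subgroup.zpowers θ)
    (lam : (Fq n)ˣ) (hlam : ∀ u : (Fq n)ˣ, u ∈ Subgroup.zpowers lam) :
    ∃ ξ : SuzukiA n θ ≃* SuzukiA n θ,
      (∀ x : SuzukiA n θ,
        ξ x = ⟨(lam : Fq n) * x.a, (lam : Fq n) * θ (lam : Fq n) * x.b⟩) ∧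
      ∀ y z : SuzukiA n θ,
        y ∈ Subgroup.center (SuzukiA n θ) → y ≠ 1 →
        z ∈ Subgroup.center (SuzukiA n θ) → z ≠ 1 →
        ∃! k : ℕ, k < 2 ^ n - 1 ∧ (ξ ^ k) y = z := by
  have hn0 : n ≠ 0 := by omega
  have hθn : orderOf θ = n := by
    rw [orderOf_eq_card_of_forall_mem_zpowers hθ, GaloisField.card_ringEquiv 2 hn0]
  have hθ1 : θ ≠ 1 := fun h => by rw [h, orderOf_one] at hθn; omega
  have hμ : ∀ w, w ∈ Subgroup.zpowers (twistNorm θ lam) :=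
    MonoidHom.forall_mem_zpowers_map
      (Finite.surjective_of_injective (twistNorm_injective (by rwa [hθn]))) hlam
  have hμn : orderOf (twistNorm θ lam) = 2 ^ n - 1 := by
    rw [orderOf_eq_card_of_forall_mem_zpowers hμ, Nat.card_units, GaloisField.card 2 n hn0]
  refine ⟨scaleHom θ lam, fun x => rfl, fun y z hy hy1 hz hz1 => ?_⟩
  have hya := a_eq_zero_of_mem_center hθ1 hy
  have hza := a_eq_zero_of_mem_center hθ1 hz
  have hyb : y.b ≠ 0 := fun h => hy1 (SuzukiA.ext hya h)
  have hzb : z.b ≠ 0 := fun h => hz1 (SuzukiA.ext hza h)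
  rw [← hμn]
  refine existsUnique_congr (fun k => ?_) |>.mp <| existsUnique_lt_orderOf_pow_eq
    (isOfFinOrder_of_finite _) (hμ (Units.mk0 z.b hzb / Units.mk0 y.b hyb))
  rw [← map_pow, ← map_pow, scaleHom_apply_eq_iff hya hza hyb hzb]
end
end

section
/- If θ is a field automorphism of F_{2^n} of odd multiplicative order, then the map a ↦ a^{1+θ} = a·a^θ is a bijection of F_{2^n}. -/
noncomputable section

open SuzukiA in
theorem stmt7 (n : ℕ) (hpos : 0 < n) (θ : Fq n ≃+* Fq n)
    (hodd : Odd (orderOf θ)) :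
    Function.Bijective (fun a : Fq n => a * θ a) := by
  rw [← Finite.injective_iff_bijective]
  intro a b h
  simp only at h
  rcases eq_or_ne b 0 with hb | hb
  · subst hb
    simp only [map_zero, mul_zero] at h
    rcases mul_eq_zero.mp h with h0 | h0
    · exact h0
    · exact (map_eq_zero θ).mp h0
  rcases eq_or_ne a 0 with ha | ha
  · subst ha
    simp only [map_zero, mul_zero] at h
    rcases mul_eq_zero.mp h.symm with h0 | h0
    · exact h0.symm
    · exact ((map_eq_zero θ).mp h0).symm
  set c : Fq n := a * b⁻¹ with hc
  have hcne : c ≠ 0 := mul_ne_zero ha (inv_ne_zero hb)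
  have hθc : θ c = c⁻¹ := by
    have hθa : θ a ≠ 0 := fun h0 => ha ((map_eq_zero θ).mp h0)
    have hθb : θ b ≠ 0 := fun h0 => hb ((map_eq_zero θ).mp h0)
    rw [hc, map_mul, map_inv₀, mul_inv, inv_inv]
    field_simp
    linear_combination h
  have hmul : ∀ (φ ψ : Fq n ≃+* Fq n) (x : Fq n), (φ * ψ) x = φ (ψ x) := fun _ _ _ => rfl
  have heven : ∀ m : ℕ, (θ ^ (2 * m)) c = c := by
    intro m
    induction m with
    | zero => rfl
    | succ m ih =>
      rw [show 2 * (m + 1) = 2 * m + 1 + 1 by ring, pow_succ, pow_succ,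
        hmul, hmul, hθc, map_inv₀, hθc, inv_inv, ih]
  obtain ⟨m, hm⟩ := hodd
  have h1 : (θ ^ orderOf θ) c = c⁻¹ := by
    rw [hm, pow_succ, hmul, hθc, map_inv₀, heven]
  rw [pow_orderOf_eq_one θ] at h1
  have hcc : c = c⁻¹ := h1
  have hc2 : c * c = 1 := by nth_rewrite 2 [hcc]; exact mul_inv_cancel₀ hcne
  have hc1 : c = 1 := by
    rcases mul_self_eq_one_iff.mp hc2 with h' | h'
    · exact h'
    · rw [h']; exact (CharTwo.neg_eq 1)
  exact (mul_inv_eq_one₀ hb).mp (hc ▸ hc1)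
end
end

section
/- For x of order 4 in G = A(n,θ), the centralizer of x is the subgroup generated by x and the center Z(G), and has order 2^{n+1}. -/
noncomputable section

/-!
Squaring gives `(a, b)² = (0, a θ(a))`, so the elements of order 4 are exactly those with
`a ≠ 0`. Two elements `(a, b)`, `(c, d)` commute iff `a θ(c) = c θ(a)`; for `a ≠ 0` this says that
`c / a` is fixed by `θ`, hence by the Frobenius (a power of `θ`), so `c / a ∈ 𝔽₂`. Thus the
centralizer of `x = (a, b)` is `{c = 0} ∪ {c = a} = Z(G) ∪ x Z(G)`, of order `2 · 2ⁿ`.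
-/

theorem eq_zero_or_eq_one_of_apply_eq_self {K : Type*} [Field K] [ExpChar K 2] [PerfectRing K 2]
    {θ : K ≃+* K} (hθ : frobeniusEquiv K 2 ∈ Subgroup.zpowers θ) {t : K} (ht : θ t = t) :
    t = 0 ∨ t = 1 := by
  have hstab : Subgroup.zpowers θ ≤ MulAction.stabilizer (K ≃+* K) t :=
    Subgroup.zpowers_le.mpr (MulAction.mem_stabilizer_iff.mpr ht)
  have hsq : t ^ 2 = t := by
    simpa [MulAction.mem_stabilizer_iff, RingAut.smul_def, frobenius_def] using hstab hθ
  exact IsIdempotentElem.iff_eq_zero_or_one.mp (by rw [IsIdempotentElem, ← sq, hsq])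

namespace SuzukiA

variable {n : ℕ} {θ : Fq n ≃+* Fq n}

@[simp] theorem mul_a (x y : SuzukiA n θ) : (x * y).a = x.a + y.a := rfl
@[simp] theorem mul_b (x y : SuzukiA n θ) : (x * y).b = x.b + y.b + x.a * θ y.a := rfl

def equivProd : SuzukiA n θ ≃ Fq n × Fq n where
  toFun x := (x.a, x.b)
  invFun p := ⟨p.1, p.2⟩

theorem sq_eq (x : SuzukiA n θ) : x ^ 2 = ⟨0, x.a * θ x.a⟩ := by
  ext <;> simp [sq, CharTwo.add_self_eq_zero]

theorem a_ne_zero_of_orderOf_eq_four {x : SuzukiA n θ} (hx : orderOf x = 4) : x.a ≠ 0 := by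
  intro ha
  have : orderOf x ∣ 2 := orderOf_dvd_of_pow_eq_one (by ext <;> simp [sq_eq, ha])
  rw [hx] at this
  omega

theorem mem_center_of_a_eq_zero {z : SuzukiA n θ} (hz : z.a = 0) :
    z ∈ Subgroup.center (SuzukiA n θ) :=
  Subgroup.mem_center_iff.mpr fun g => by ext <;> simp [hz, add_comm]

theorem commute_iff {x y : SuzukiA n θ} : Commute x y ↔ x.a * θ y.a = y.a * θ x.a := by
  constructor
  · intro h
    have hb : x.b + y.b + x.a * θ y.a = y.b + x.b + y.a * θ x.a := congrArg SuzukiA.b h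
    linear_combination hb
  · intro h
    ext
    · exact add_comm _ _
    · simp only [mul_b, h, add_comm x.b]

variable {x y : SuzukiA n θ}

theorem mem_centralizer_singleton_iff (hθ : frobeniusEquiv (Fq n) 2 ∈ Subgroup.zpowers θ)
    (hx : x.a ≠ 0) : y ∈ Subgroup.centralizer {x} ↔ y.a = 0 ∨ y.a = x.a := by
  rw [Subgroup.mem_centralizer_singleton_iff]
  change Commute y x ↔ _
  rw [commute_iff]
  constructor
  · intro h
    have hfix : θ (y.a / x.a) = y.a / x.a := by
      rw [map_div₀, div_eq_div_iff ((map_ne_zero θ).mpr hx) hx]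
      linear_combination -h
    rcases eq_zero_or_eq_one_of_apply_eq_self hθ hfix with h0 | h1
    · exact Or.inl (by simpa [hx] using h0)
    · exact Or.inr ((div_eq_one_iff_eq hx).mp h1)
  · rintro (h | h) <;> simp [h]

theorem centralizer_eq_closure (hθ : frobeniusEquiv (Fq n) 2 ∈ Subgroup.zpowers θ)
    (hx : x.a ≠ 0) :
    Subgroup.centralizer {x} =
      Subgroup.closure ({x} ∪ (Subgroup.center (SuzukiA n θ) : Set (SuzukiA n θ))) := by
  apply le_antisymm
  · intro y hy
    rcases (mem_centralizer_singleton_iff hθ hx).mp hy with h | h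
    · exact Subgroup.subset_closure (Or.inr (mem_center_of_a_eq_zero h))
    · have hyx : y = x * ⟨0, x.b + y.b⟩ := by
        ext <;> simp [h, ← add_assoc, CharTwo.add_self_eq_zero]
      rw [hyx]
      exact mul_mem (Subgroup.subset_closure (Or.inl rfl))
        (Subgroup.subset_closure (Or.inr (mem_center_of_a_eq_zero rfl)))
  · rw [Subgroup.closure_le, Set.union_subset_iff]
    exact ⟨Set.singleton_subset_iff.mpr (Subgroup.mem_centralizer_singleton_iff.mpr rfl),
      Subgroup.center_le_centralizer _⟩

theorem card_centralizer (hθ : frobeniusEquiv (Fq n) 2 ∈ Subgroup.zpowers θ)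
    (hx : x.a ≠ 0) (hn : n ≠ 0) :
    Nat.card (Subgroup.centralizer {x}) = 2 ^ (n + 1) :=
  calc Nat.card (Subgroup.centralizer {x})
      = Nat.card {p : Fq n × Fq n // p.1 ∈ ({0, x.a} : Set (Fq n))} :=
        Nat.card_congr (equivProd.subtypeEquiv fun _ => mem_centralizer_singleton_iff hθ hx)
    _ = Nat.card ({0, x.a} : Set (Fq n)) * Nat.card (Fq n) := by
        rw [Nat.card_congr Equiv.prodSubtypeFstEquivSubtypeProd, Nat.card_prod]
    _ = 2 ^ (n + 1) := by
        rw [Nat.card_coe_set_eq, Set.ncard_pair hx.symm, GaloisField.card 2 n hn, pow_succ,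
          mul_comm]

end SuzukiA

open SuzukiA in
theorem stmt8_general (n : ℕ) (hn : 1 < n) (θ : Fq n ≃+* Fq n)
    (hθ : ∀ σ : Fq n ≃+* Fq n, σ ∈ Subgroup.zpowers θ)
    (x : SuzukiA n θ) (hx : orderOf x = 4) :
    Subgroup.centralizer {x} =
      Subgroup.closure ({x} ∪ (Subgroup.center (SuzukiA n θ) : Set (SuzukiA n θ))) ∧
    Nat.card (Subgroup.centralizer {x} : Subgroup (SuzukiA n θ)) = 2 ^ (n + 1) := by
  have hfrob := hθ (frobeniusEquiv (Fq n) 2)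
  have ha := a_ne_zero_of_orderOf_eq_four hx
  exact ⟨centralizer_eq_closure hfrob ha, card_centralizer hfrob ha (by omega)⟩

open SuzukiA in
theorem stmt8 (n : ℕ) (hn : 1 < n) (hodd : Odd n) (θ : Fq n ≃+* Fq n)
    (hθ : ∀ σ : Fq n ≃+* Fq n, σ ∈ Subgroup.zpowers θ)
    (x : SuzukiA n θ) (hx : orderOf x = 4) :
    Subgroup.centralizer {x} =
      Subgroup.closure ({x} ∪ (Subgroup.center (SuzukiA n θ) : Set (SuzukiA n θ))) ∧
    Nat.card (Subgroup.centralizer {x} : Subgroup (SuzukiA n θ)) = 2 ^ (n + 1) :=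
  stmt8_general n hn θ hθ x hx
end
end

section
/- The conjugacy class of a noncentral element x of G = A(n,θ) equals the coset x·[x,G] and has size 2^{n-1}. -/
noncomputable section

namespace SuzukiA

variable {n : ℕ} {θ : Fq n ≃+* Fq n}

theorem inv_def (x : SuzukiA n θ) : x⁻¹ = ⟨x.a, x.b + x.a * θ x.a⟩ := rfl

theorem char2 : (2 : Fq n) = 0 := by
  have := CharP.cast_eq_zero (Fq n) 2
  exact_mod_cast this

theorem commutator_eq (x g : SuzukiA n θ) :
    x⁻¹ * g⁻¹ * x * g = ⟨0, x.a * θ g.a + g.a * θ x.a⟩ := by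
  have h2 : (2 : Fq n) = 0 := char2
  ext
  · show x.a + g.a + x.a + g.a = 0
    linear_combination (x.a + g.a) * h2
  · show x.b + x.a * θ x.a + (g.b + g.a * θ g.a) + x.a * θ g.a + x.b
        + (x.a + g.a) * θ x.a + g.b + (x.a + g.a + x.a) * θ g.a
      = x.a * θ g.a + g.a * θ x.a
    linear_combination (x.b + g.b + x.a * θ x.a + g.a * θ g.a + x.a * θ g.a) * h2

end SuzukiA

open SuzukiA in
theorem stmt10 (n : ℕ) (hn : 1 < n) (hodd : Odd n) (θ : Fq n ≃+* Fq n)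
    (hθ : ∀ σ : Fq n ≃+* Fq n, σ ∈ Subgroup.zpowers θ)
    (x : SuzukiA n θ) (hx : x ∉ Subgroup.center (SuzukiA n θ)) :
    {y : SuzukiA n θ | IsConj x y} =
      (fun z => x * z) '' {z : SuzukiA n θ | ∃ g, z = x⁻¹ * g⁻¹ * x * g} ∧
    Nat.card {y : SuzukiA n θ | IsConj x y} = 2 ^ (n - 1) := by
  have h2 : (2 : Fq n) = 0 := char2
  -- x.a ≠ 0
  have ha : x.a ≠ 0 := by
    intro h
    apply hx
    rw [Subgroup.mem_center_iff]
    intro g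
    ext
    · show g.a + x.a = x.a + g.a
      ring
    · show g.b + x.b + g.a * θ x.a = x.b + g.b + x.a * θ g.a
      rw [h, map_zero]
      ring
  -- fixed points of θ are 0 and 1
  have hfix : ∀ c : Fq n, θ c = c → c = 0 ∨ c = 1 := by
    intro c hc
    have hφb : Function.Bijective (frobenius (Fq n) 2) :=
      ⟨(frobenius (Fq n) 2).injective, Finite.surjective_of_injective
        (frobenius (Fq n) 2).injective⟩
    let φ : Fq n ≃+* Fq n := RingEquiv.ofBijective _ hφb
    let S : Subgroup (Fq n ≃+* Fq n) :=
      { carrier := {σ | σ c = c}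
        one_mem' := rfl
        mul_mem' := by
          intro σ τ hσ hτ
          show σ (τ c) = c
          rw [hτ, hσ]
        inv_mem' := by
          intro σ hσ
          show σ.symm c = c
          conv_lhs => rw [← hσ]
          exact σ.symm_apply_apply c }
    have hφS : φ ∈ S := Subgroup.zpowers_le.mpr (show θ ∈ S from hc) (hθ φ)
    have : c ^ 2 = c := hφS
    have : c * (c - 1) = 0 := by ring_nf; linear_combination this
    rcases mul_eq_zero.mp this with h | h
    · exact Or.inl h
    · exact Or.inr (by linear_combination h)
  -- the commutator map
  let F : Fq n →+ Fq n :=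
    { toFun := fun c => x.a * θ c + c * θ x.a
      map_zero' := by simp
      map_add' := by intros; simp [map_add]; ring }
  -- kernel of F is {0, x.a}
  have hker : (F.ker : Set (Fq n)) = {0, x.a} := by
    ext c
    simp only [SetLike.mem_coe, AddMonoidHom.mem_ker, Set.mem_insert_iff,
      Set.mem_singleton_iff]
    constructor
    · intro hc
      have hc0 : x.a * θ c + c * θ x.a = 0 := hc
      have hc' : x.a * θ c = c * θ x.a := by linear_combination hc0 - (c * θ x.a) * h2
      by_cases h0 : c = 0
      · exact Or.inl h0
      · right
        have hθa : θ x.a ≠ 0 := fun h => ha (by simpa using congrArg θ.symm h)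
        have key : θ (c * x.a⁻¹) = c * x.a⁻¹ := by
          rw [map_mul, map_inv₀, ← div_eq_mul_inv, ← div_eq_mul_inv,
            div_eq_div_iff hθa ha]
          linear_combination hc'
        rcases hfix _ key with h | h
        · exact absurd ((mul_eq_zero.mp h).resolve_right (inv_ne_zero ha)) h0
        · field_simp at h
          exact h
    · rintro (h | h)
      · simp [F, h]
      · show x.a * θ c + c * θ x.a = 0
        rw [h]
        linear_combination (x.a * θ x.a) * h2
  have hkercard : Nat.card F.ker = 2 := by
    calc Nat.card F.ker = Nat.card ({0, x.a} : Set (Fq n)) :=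
          Nat.card_congr (Equiv.setCongr hker)
      _ = 2 := by rw [Nat.card_coe_set_eq, Set.ncard_pair (Ne.symm ha)]
  -- card of range F
  have hcardFq : Nat.card (Fq n) = 2 ^ n := GaloisField.card 2 n (by omega)
  have hrange : Nat.card F.range = 2 ^ (n - 1) := by
    have h1 := AddSubgroup.card_eq_card_quotient_mul_card_addSubgroup F.ker
    have h2' : Nat.card (Fq n ⧸ F.ker) = Nat.card F.range :=
      Nat.card_congr (QuotientAddGroup.quotientKerEquivRange F).toEquiv
    rw [hcardFq, h2', hkercard] at h1
    have hpow : (2 : ℕ) ^ n = 2 ^ (n - 1) * 2 := by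
      rw [← pow_succ]
      congr 1
      omega
    omega
  -- the commutator set
  have hC : {z : SuzukiA n θ | ∃ g, z = x⁻¹ * g⁻¹ * x * g}
      = (fun b => (⟨0, b⟩ : SuzukiA n θ)) '' (F.range : Set (Fq n)) := by
    ext z
    simp only [Set.mem_setOf_eq, Set.mem_image, SetLike.mem_coe,
      AddMonoidHom.mem_range]
    constructor
    · rintro ⟨g, rfl⟩
      exact ⟨x.a * θ g.a + g.a * θ x.a, ⟨g.a, rfl⟩, (commutator_eq x g).symm⟩
    · rintro ⟨b, ⟨c, rfl⟩, rfl⟩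
      exact ⟨⟨c, 0⟩, (commutator_eq x ⟨c, 0⟩).symm⟩
  -- first part
  have hmain : {y : SuzukiA n θ | IsConj x y} =
      (fun z => x * z) '' {z : SuzukiA n θ | ∃ g, z = x⁻¹ * g⁻¹ * x * g} := by
    ext y
    simp only [Set.mem_setOf_eq, Set.mem_image, isConj_iff]
    constructor
    · rintro ⟨c, rfl⟩
      exact ⟨x⁻¹ * (c⁻¹)⁻¹ * x * c⁻¹, ⟨c⁻¹, rfl⟩, by group⟩
    · rintro ⟨z, ⟨g, rfl⟩, rfl⟩
      exact ⟨g⁻¹, by group⟩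
  refine ⟨hmain, ?_⟩
  rw [hmain, hC]
  rw [Nat.card_image_of_injective (mul_right_injective (a := x)) _]
  rw [Nat.card_image_of_injective (fun b b' h => by
    simpa using congrArg SuzukiA.b h) _]
  exact hrange
end
end

section
/- An oriented Cayley graph Cay(G,C) with skew adjacency matrix S has uniform mixing at time τ (i.e., all entries of e^{τS} have absolute value 1/√|G|) if and only if there exist signs t_j ∈ {±1}, one for each conjugacy class K_j of G, such that √|G|·e^{τS} = Σ_j t_j K_j, where K_j denotes the 0-1 matrix of the corresponding class sum acting by the regular representation. -/
noncomputable section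

instance (G : Type*) [Group G] [Fintype G] : Fintype (ConjClasses G) :=
  Fintype.ofFinite _

/-- The skew adjacency matrix of the oriented Cayley graph `Cay(G, C)`:
entry `(u, v)` is `1` if `v * u⁻¹ ∈ C`, `-1` if `(v * u⁻¹)⁻¹ ∈ C`, and `0`
otherwise. -/
def skewAdj (G : Type*) [Group G] [Fintype G] [DecidableEq G] (C : Finset G) :
    Matrix G G ℝ :=
  fun u v => if v * u⁻¹ ∈ C then 1 else if (v * u⁻¹)⁻¹ ∈ C then -1 else 0

open scoped Classical in
/-- The 0-1 matrix of the conjugacy class sum `K` acting by the right regular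
representation: entry `(u, v)` is `1` if `v * u⁻¹` lies in the class. -/
def classMatrix (G : Type*) [Group G] [Fintype G] [DecidableEq G]
    (c : ConjClasses G) : Matrix G G ℝ :=
  fun u v => if v * u⁻¹ ∈ c.carrier then 1 else 0

/-!
Since `C` is a union of conjugacy classes, the skew adjacency matrix `S` is invariant under
simultaneous left and right translation of rows and columns. Such an invariance is commutation
with a permutation matrix, so it passes to `exp (τ • S)`. A matrix invariant under both
translations has `(u, v)` entry `f (v * u⁻¹)` for a class function `f`, i.e. it is
`∑ c, f c • K_c`; hence all entries have modulus `1 / √|G|` exactly when `√|G| • f` is `±1`-valued.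
-/

open NormedSpace

namespace Matrix

section Permutation

variable {n α : Type*} [Fintype n] [DecidableEq n]

theorem commute_toMatrix_toPEquiv_iff [NonAssocSemiring α] (e : n ≃ n) (A : Matrix n n α) :
    Commute (e.toPEquiv.toMatrix : Matrix n n α) A ↔ A.submatrix e e = A := by
  rw [Commute, SemiconjBy, PEquiv.toMatrix_toPEquiv_mul, PEquiv.mul_toMatrix_toPEquiv]
  refine ⟨fun h => ?_, fun h => ?_⟩
  · ext u v
    simpa using congr_fun₂ h u (e v)
  · ext u v
    simpa using congr_fun₂ h u (e.symm v)

theorem exp_submatrix_eq_of_submatrix_eq [Ring α] [TopologicalSpace α] [IsTopologicalRing α]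
    [T2Space α] (e : n ≃ n) {A : Matrix n n α} (hA : A.submatrix e e = A) :
    (exp A).submatrix e e = exp A :=
  (commute_toMatrix_toPEquiv_iff e _).1 ((commute_toMatrix_toPEquiv_iff e A).2 hA).exp_right

end Permutation

section BiInvariant

variable {G α : Type*} [Group G]

def IsBiInvariant (M : Matrix G G α) : Prop :=
  (∀ g, M.submatrix (Equiv.mulLeft g) (Equiv.mulLeft g) = M) ∧
    ∀ g, M.submatrix (Equiv.mulRight g) (Equiv.mulRight g) = M

namespace IsBiInvariant

variable {M : Matrix G G α}

theorem smul {R : Type*} [SMul R α] (hM : M.IsBiInvariant) (r : R) : (r • M).IsBiInvariant :=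
  ⟨fun g => congr_arg (r • ·) (hM.1 g), fun g => congr_arg (r • ·) (hM.2 g)⟩

protected theorem exp [Fintype G] [DecidableEq G] [Ring α] [TopologicalSpace α]
    [IsTopologicalRing α] [T2Space α] (hM : M.IsBiInvariant) : (exp M).IsBiInvariant :=
  ⟨fun g => exp_submatrix_eq_of_submatrix_eq _ (hM.1 g),
    fun g => exp_submatrix_eq_of_submatrix_eq _ (hM.2 g)⟩

theorem apply_eq (hM : M.IsBiInvariant) (u v : G) : M u v = M 1 (v * u⁻¹) := by
  simpa using (congr_fun₂ (hM.2 u⁻¹) u v).symm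

theorem apply_one_conj (hM : M.IsBiInvariant) (g x : G) : M 1 (g * x * g⁻¹) = M 1 x := by
  have hr := congr_fun₂ (hM.2 g) 1 (g * x * g⁻¹)
  have hl := congr_fun₂ (hM.1 g) 1 x
  simp only [submatrix_apply, Equiv.coe_mulRight, Equiv.coe_mulLeft] at hr hl
  rw [← hr, ← hl]
  simp

def classFun (hM : M.IsBiInvariant) : ConjClasses G → α :=
  Quotient.lift (M 1) fun _ _ hab => by
    obtain ⟨g, rfl⟩ := isConj_iff.1 hab
    exact (hM.apply_one_conj g _).symm

theorem classFun_mk (hM : M.IsBiInvariant) (x : G) : hM.classFun (ConjClasses.mk x) = M 1 x :=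
  rfl

end IsBiInvariant

end BiInvariant

end Matrix

section CayleyGraph

variable {G : Type*} [Group G] [Fintype G] [DecidableEq G]

theorem sum_smul_classMatrix_apply (t : ConjClasses G → ℝ) (u v : G) :
    (∑ c, t c • classMatrix G c) u v = t (ConjClasses.mk (v * u⁻¹)) := by
  simp only [Matrix.sum_apply, Matrix.smul_apply, classMatrix, ConjClasses.mem_carrier_iff_mk_eq,
    smul_eq_mul, mul_ite, mul_one, mul_zero, Finset.sum_ite_eq, Finset.mem_univ, if_true]

theorem Matrix.IsBiInvariant.eq_sum_smul_classMatrix {M : Matrix G G ℝ} (hM : M.IsBiInvariant) :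
    M = ∑ c, hM.classFun c • classMatrix G c := by
  ext u v
  rw [sum_smul_classMatrix_apply, hM.classFun_mk, hM.apply_eq]

theorem isBiInvariant_skewAdj {C : Finset G} (hC : ∀ g ∈ C, ∀ h, IsConj g h → h ∈ C) :
    (skewAdj G C).IsBiInvariant := by
  have conj_mem : ∀ g x : G, g * x * g⁻¹ ∈ C ↔ x ∈ C := fun g x =>
    ⟨fun hx => hC _ hx x (isConj_iff.2 ⟨g⁻¹, by group⟩),
      fun hx => hC x hx _ (isConj_iff.2 ⟨g, rfl⟩)⟩
  refine ⟨fun g => ?_, fun g => ?_⟩ <;> ext u v <;> simp only [skewAdj, Matrix.submatrix_apply,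
    Equiv.coe_mulLeft, Equiv.coe_mulRight]
  · have e1 : g * v * (g * u)⁻¹ = g * (v * u⁻¹) * g⁻¹ := by group
    have e2 : (g * (v * u⁻¹) * g⁻¹)⁻¹ = g * (v * u⁻¹)⁻¹ * g⁻¹ := by group
    simp only [e1, e2, conj_mem]
  · rw [show v * g * (u * g)⁻¹ = v * u⁻¹ by group]

end CayleyGraph

theorem stmt16_general (G : Type*) [Group G] [Fintype G] [DecidableEq G] (C : Finset G)
    (hconj : ∀ g ∈ C, ∀ h, IsConj g h → h ∈ C) (τ : ℝ) :
    (∀ u v : G,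
        |NormedSpace.exp (τ • skewAdj G C) u v| = 1 / Real.sqrt (Nat.card G)) ↔
    ∃ t : ConjClasses G → ℝ, (∀ c, t c = 1 ∨ t c = -1) ∧
      Real.sqrt (Nat.card G) • NormedSpace.exp (τ • skewAdj G C) =
        ∑ c : ConjClasses G, t c • classMatrix G c := by
  have hE := ((isBiInvariant_skewAdj hconj).smul τ).exp
  have hn : 0 < Real.sqrt (Nat.card G) := Real.sqrt_pos.2 (by exact_mod_cast Nat.card_pos)
  have abs_eq_iff : ∀ x : ℝ, |x| = 1 / Real.sqrt (Nat.card G) ↔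
      Real.sqrt (Nat.card G) * x = 1 ∨ Real.sqrt (Nat.card G) * x = -1 := fun x => by
    rw [← abs_eq zero_le_one, abs_mul, abs_of_pos hn, eq_div_iff hn.ne', mul_comm]
  constructor
  · intro h
    refine ⟨Real.sqrt (Nat.card G) • hE.classFun, fun c => ?_, ?_⟩
    · obtain ⟨x, rfl⟩ := ConjClasses.mk_surjective c
      exact (abs_eq_iff _).1 (h 1 x)
    · conv_lhs => rw [hE.eq_sum_smul_classMatrix]
      simp only [Finset.smul_sum, smul_smul, Pi.smul_apply, smul_eq_mul]
  · rintro ⟨t, ht, heq⟩ u v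
    have huv := congr_fun₂ heq u v
    rw [Matrix.smul_apply, sum_smul_classMatrix_apply, smul_eq_mul] at huv
    rw [abs_eq_iff, huv]
    exact ht _

theorem stmt16 (G : Type*) [Group G] [Fintype G] [DecidableEq G] (C : Finset G)
    (h1 : (1 : G) ∉ C) (h2 : ∀ c ∈ C, c⁻¹ ∉ C)
    (hconj : ∀ g ∈ C, ∀ h, IsConj g h → h ∈ C) (τ : ℝ) :
    (∀ u v : G,
        |NormedSpace.exp (τ • skewAdj G C) u v| = 1 / Real.sqrt (Nat.card G)) ↔
    ∃ t : ConjClasses G → ℝ, (∀ c, t c = 1 ∨ t c = -1) ∧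
      Real.sqrt (Nat.card G) • NormedSpace.exp (τ • skewAdj G C) =
        ∑ c : ConjClasses G, t c • classMatrix G c :=
  stmt16_general G C hconj τ
end
end

section
/- Let G = A(n,θ) for odd n = 2m+1 > 1, and let C be a union of conjugacy classes of order-4 elements containing exactly one class from each inverse pair (so |C| = 2^{n-1}(2^n−1)). Then the continuous-time quantum walk on the oriented Cayley graph Cay(G,C), with transition matrices U(t) = e^{tS} for S the skew adjacency matrix, has uniform mixing at time τ = π/2^{n+1}: every entry of U(τ) has absolute value 2^{-n}. -/
/-!
Write `q = 2 ^ n`. The skew adjacency matrix is the Cayley matrix `S u v = f (v u⁻¹)` of the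
class function `f = 1_C - 1_{C⁻¹}`. By additive Hilbert 90 the conjugacy class of an element
`(a, b)` with `a ≠ 0` is determined by the trace of `b / (a θ a)`, so
`f (a, b) = ε(a) χ(b / (a θ a))` with `χ = (-1) ^ trace`. Character sums, together with the
injectivity of `c ↦ c θ c` for odd `n`, then give `S² = q T - q² I` and `S T = 0`, where `T` is
the Cayley matrix of the indicator of `{(0, b)}`. Hence `J = S / q` satisfies `J³ = -J`, so
`exp (t J) = I + sin t • J + (1 - cos t) • J²`, which at `t = π / 2` equals `(S + T) / q`, a
matrix all of whose entries are `±1 / q`.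
-/

noncomputable section

noncomputable instance {n : ℕ} {θ : Fq n ≃+* Fq n} : DecidableEq (SuzukiA n θ) :=
  Classical.decEq _

namespace Fq

open scoped Classical

variable {n : ℕ}

theorem natCard_ringEquiv (hn : n ≠ 0) : Nat.card (Fq n ≃+* Fq n) = n := by
  let e : (Fq n ≃+* Fq n) ≃ (Fq n ≃ₐ[ZMod 2] Fq n) :=
    { toFun σ := AlgEquiv.ofRingEquiv (f := σ) fun x =>
        RingHom.congr_fun (RingHom.ext_zmod ((σ : Fq n →+* Fq n).comp (algebraMap _ _)) _) x
      invFun τ := τ.toRingEquiv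
      left_inv _ := rfl
      right_inv _ := rfl }
  rw [Nat.card_congr e, IsGalois.card_aut_eq_finrank, GaloisField.finrank 2 hn]

variable {θ : Fq n ≃+* Fq n}

theorem pow_eq_one (hn : n ≠ 0) : θ ^ n = 1 := by
  simpa [natCard_ringEquiv hn] using pow_card_eq_one' (x := θ)

theorem eq_zero_or_one_of_apply_eq (hθ : ∀ σ : Fq n ≃+* Fq n, σ ∈ Subgroup.zpowers θ)
    {x : Fq n} (hx : θ x = x) : x = 0 ∨ x = 1 := by
  have hfix : Subgroup.zpowers θ ≤ MulAction.stabilizer (Fq n ≃+* Fq n) x :=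
    Subgroup.zpowers_le.mpr hx
  have hsq : x ^ 2 = x := hfix (hθ (frobeniusEquiv (Fq n) 2))
  rw [sq] at hsq
  rcases mul_eq_zero.mp (show x * (x - 1) = 0 by linear_combination hsq) with h | h
  exacts [Or.inl h, Or.inr (sub_eq_zero.mp h)]

theorem apply_eq_of_apply_apply_eq (hodd : Odd n) {x : Fq n} (hx : θ (θ x) = x) : θ x = x := by
  obtain ⟨k, hk⟩ := hodd
  have hpow : (θ * θ) ^ (k + 1) = θ := by
    rw [← sq, ← pow_mul, show 2 * (k + 1) = n + 1 by omega, pow_succ,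
      pow_eq_one (by omega), one_mul]
  have hmem : θ * θ ∈ MulAction.stabilizer (Fq n ≃+* Fq n) x := hx
  simpa [hpow] using pow_mem hmem (k + 1)

/-- Since `θ` generates the Galois group, this is the absolute trace of `𝔽_{2^n} / 𝔽₂`. -/
def trace (θ : Fq n ≃+* Fq n) : Fq n →+ Fq n :=
  ∑ i ∈ Finset.range n, ((θ ^ i : Fq n ≃+* Fq n) : Fq n →+* Fq n).toAddMonoidHom

theorem trace_apply (x : Fq n) : trace θ x = ∑ i ∈ Finset.range n, (θ ^ i) x := by
  simp [trace]

theorem sum_range_pow_succ_apply (hn : n ≠ 0) (x : Fq n) :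
    ∑ i ∈ Finset.range n, (θ ^ (i + 1)) x = trace θ x := by
  have h := (Finset.sum_range_succ' (fun i => (θ ^ i) x) n).symm.trans
    (Finset.sum_range_succ (fun i => (θ ^ i) x) n)
  rw [pow_eq_one hn, pow_zero, add_left_inj] at h
  rw [h, trace_apply]

theorem trace_apply_apply (hn : n ≠ 0) (x : Fq n) : trace θ (θ x) = trace θ x := by
  simp_rw [← sum_range_pow_succ_apply hn x, trace_apply, pow_succ, RingAut.mul_apply]

theorem apply_trace (hn : n ≠ 0) (x : Fq n) : θ (trace θ x) = trace θ x := by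
  conv_rhs => rw [← sum_range_pow_succ_apply hn x]
  simp_rw [trace_apply, map_sum, pow_succ', RingAut.mul_apply]

theorem trace_one (hodd : Odd n) : trace θ 1 = 1 := by
  simp [trace_apply, CharTwo.natCast_eq_ite, Nat.not_even_iff_odd.mpr hodd]

theorem trace_eq_zero_or_one (hθ : ∀ σ : Fq n ≃+* Fq n, σ ∈ Subgroup.zpowers θ) (hn : n ≠ 0)
    (x : Fq n) : trace θ x = 0 ∨ trace θ x = 1 :=
  eq_zero_or_one_of_apply_eq hθ (apply_trace hn x)

theorem trace_add_apply (hn : n ≠ 0) (t : Fq n) : trace θ (t + θ t) = 0 := by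
  rw [map_add, trace_apply_apply hn, CharTwo.add_self_eq_zero]

theorem add_apply_ne_one (hodd : Odd n) (t : Fq n) : t + θ t ≠ 1 := fun h => by
  simpa [h, trace_one hodd] using trace_add_apply (θ := θ) hodd.pos.ne' t

/-- Additive Hilbert 90, by counting: `t ↦ t + θ t` has kernel `𝔽₂`, so its image has index `2`
and lies in the proper subgroup `ker trace`. -/
theorem exists_add_apply_eq (hθ : ∀ σ : Fq n ≃+* Fq n, σ ∈ Subgroup.zpowers θ) (hodd : Odd n)
    {x : Fq n} (hx : trace θ x = 0) : ∃ t, t + θ t = x := by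
  let ψ : Fq n →+ Fq n := AddMonoidHom.id _ + (θ : Fq n →+* Fq n).toAddMonoidHom
  have hle : ψ.range ≤ (trace θ).ker := by
    rintro _ ⟨t, rfl⟩
    exact trace_add_apply hodd.pos.ne' t
  have hker : Nat.card ψ.ker ≤ 2 := by
    have hsub : (ψ.ker : Set (Fq n)) ⊆ {0, 1} := fun t ht =>
      eq_zero_or_one_of_apply_eq hθ (CharTwo.add_eq_zero.mp ht).symm
    calc Nat.card ψ.ker ≤ Nat.card ({0, 1} : Set (Fq n)) := Nat.card_mono (Set.toFinite _) hsub
      _ = 2 := by rw [Nat.card_coe_set_eq, Set.ncard_pair zero_ne_one]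
  have hindex : 1 < (trace θ).ker.index := AddSubgroup.one_lt_index_of_ne_top fun h => by
    have h1 : (1 : Fq n) ∈ (trace θ).ker := h ▸ AddSubgroup.mem_top 1
    simp [trace_one hodd] at h1
  have hK := (trace θ).ker.card_mul_index
  have hR := ψ.ker.card_mul_index
  rw [AddSubgroup.index_ker] at hR
  have heq : ψ.range = (trace θ).ker := AddSubgroup.eq_of_le_of_card_ge hle (by nlinarith)
  exact (heq ▸ hx : x ∈ ψ.range)

theorem mul_apply_injective (hodd : Odd n) : Function.Injective fun c : Fq n => c * θ c := by
  intro c c' h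
  simp only at h
  rcases eq_or_ne c' 0 with rfl | hc'
  · simpa using h
  set u := c / c' with hu
  have hθc' : θ c' ≠ 0 := by simpa using hc'
  have hnorm : u * θ u = 1 := by
    rw [hu, map_div₀]
    field_simp
    exact h
  have hθu : θ u = u⁻¹ := eq_inv_of_mul_eq_one_right hnorm
  have hfix : θ u = u := apply_eq_of_apply_apply_eq hodd (by rw [hθu, map_inv₀, hθu, inv_inv])
  rw [hfix] at hnorm
  have : (u + 1) * (u + 1) = 0 := by
    linear_combination hnorm + (u + 1) * CharTwo.two_eq_zero (R := Fq n)
  rw [mul_self_eq_zero, CharTwo.add_eq_zero, hu, div_eq_one_iff_eq hc'] at this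
  exact this

theorem eq_zero_of_mul_apply_add_eq (hodd : Odd n) {α c : Fq n}
    (h : (α + c) * θ (α + c) = c * θ c) : α = 0 := by
  by_contra hα
  have hθα : θ α ≠ 0 := by simpa using hα
  apply add_apply_ne_one (θ := θ) hodd (c / α)
  rw [map_div₀, map_add] at *
  field_simp
  linear_combination h - θ α * α * CharTwo.two_eq_zero (R := Fq n)

def traceChar (θ : Fq n ≃+* Fq n) (x : Fq n) : ℝ := if trace θ x = 0 then 1 else -1

theorem traceChar_zero : traceChar θ 0 = 1 := by simp [traceChar]

theorem traceChar_one (hodd : Odd n) : traceChar θ 1 = -1 := by simp [traceChar, trace_one hodd]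

theorem traceChar_add (hθ : ∀ σ : Fq n ≃+* Fq n, σ ∈ Subgroup.zpowers θ) (hn : n ≠ 0)
    (x y : Fq n) : traceChar θ (x + y) = traceChar θ x * traceChar θ y := by
  rcases trace_eq_zero_or_one hθ hn x with hx | hx <;>
    rcases trace_eq_zero_or_one hθ hn y with hy | hy <;>
    simp [traceChar, hx, hy, CharTwo.add_self_eq_zero]

theorem sum_traceChar_mul (hθ : ∀ σ : Fq n ≃+* Fq n, σ ∈ Subgroup.zpowers θ) (hodd : Odd n)
    (s : Fq n) : ∑ x, traceChar θ (x * s) = if s = 0 then (Fintype.card (Fq n) : ℝ) else 0 := by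
  split_ifs with hs
  · simp [hs, traceChar_zero]
  · have hshift : ∑ x, traceChar θ ((x + s⁻¹) * s) = ∑ x, traceChar θ (x * s) :=
      Fintype.sum_equiv (Equiv.addRight s⁻¹) _ _ fun _ => rfl
    simp_rw [add_mul, inv_mul_cancel₀ hs, traceChar_add hθ hodd.pos.ne', traceChar_one hodd,
      ← Finset.sum_mul] at hshift
    linarith

end Fq

section SignedIndicator

variable {G : Type*} [Group G] [DecidableEq G] {C : Finset G} {g : G}

def signedIndicator (C : Finset G) (g : G) : ℝ :=
  if g ∈ C then 1 else if g⁻¹ ∈ C then -1 else 0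

theorem signedIndicator_eq_zero (hg : g ∉ C) (hg' : g⁻¹ ∉ C) : signedIndicator C g = 0 := by
  simp [signedIndicator, hg, hg']

theorem signedIndicator_of_orderOf_eq_four
    (hpair : ∀ g : G, orderOf g = 4 → (g ∈ C ↔ g⁻¹ ∉ C)) (hg : orderOf g = 4) :
    signedIndicator C g = if g ∈ C then 1 else -1 := by
  have := hpair g hg
  unfold signedIndicator
  split_ifs <;> tauto

theorem signedIndicator_mul_self
    (hpair : ∀ g : G, orderOf g = 4 → (g ∈ C ↔ g⁻¹ ∉ C)) (hg : orderOf g = 4) :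
    signedIndicator C g * signedIndicator C g = 1 := by
  rw [signedIndicator_of_orderOf_eq_four hpair hg]
  split_ifs <;> norm_num

end SignedIndicator

section CayleyMatrix

variable {G R : Type*} [Group G]

def cayleyMatrix (f : G → R) : Matrix G G R := fun u v => f (v * u⁻¹)

theorem cayleyMatrix_mul [Fintype G] [NonUnitalNonAssocSemiring R] (f g : G → R) :
    cayleyMatrix f * cayleyMatrix g = cayleyMatrix fun h => ∑ x, f x * g (h * x⁻¹) := by
  ext u v
  exact Fintype.sum_equiv (Equiv.mulRight u⁻¹) _ _ fun w => by simp [cayleyMatrix, mul_assoc]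

theorem cayleyMatrix_ite_eq_one [DecidableEq G] [Zero R] [One R] :
    cayleyMatrix (fun h : G => if h = 1 then (1 : R) else 0) = 1 := by
  ext u v
  simp [cayleyMatrix, Matrix.one_apply, mul_inv_eq_one, eq_comm]

theorem skewAdj_eq_cayleyMatrix [Fintype G] [DecidableEq G] (C : Finset G) :
    skewAdj G C = cayleyMatrix (signedIndicator C) := rfl

end CayleyMatrix

section Exponential

variable {A : Type*} [Ring A] [Algebra ℝ A] [TopologicalSpace A] [IsTopologicalRing A]
  [ContinuousSMul ℝ A] [T2Space A]

theorem exp_smul_of_pow_three_eq_neg {J : A} (hJ : J ^ 3 = -J) (t : ℝ) :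
    NormedSpace.exp (t • J) = 1 + Real.sin t • J + (1 - Real.cos t) • J ^ 2 := by
  have hodd : ∀ k : ℕ, J ^ (2 * k + 1) = (-1 : ℝ) ^ k • J := by
    intro k
    induction k with
    | zero => simp
    | succ k ih =>
      rw [show 2 * (k + 1) + 1 = 2 * k + 1 + 2 by ring, pow_add, ih, smul_mul_assoc, ← pow_succ',
        hJ, pow_succ, mul_neg_one, neg_smul, smul_neg]
  have heven : ∀ k : ℕ, (((2 * k).factorial : ℝ)⁻¹ • (t • J) ^ (2 * k)) =
      (if k = 0 then 1 + J ^ 2 else 0) - ((-1) ^ k * t ^ (2 * k) / (2 * k).factorial) • J ^ 2 := by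
    rintro (_ | k)
    · simp
    · rw [smul_pow, show 2 * (k + 1) = 2 * k + 1 + 1 by ring, pow_succ J, hodd, smul_mul_assoc,
        ← sq, smul_smul, smul_smul, if_neg k.succ_ne_zero, zero_sub, ← neg_smul]
      congr 1
      ring
  have hsum : HasSum (fun k => ((k.factorial : ℝ)⁻¹ • (t • J) ^ k))
      ((1 + J ^ 2 - Real.cos t • J ^ 2) + Real.sin t • J) := by
    refine HasSum.even_add_odd ?_ ?_
    · simp_rw [heven]
      exact (hasSum_ite_eq 0 (1 + J ^ 2)).sub ((Real.hasSum_cos t).smul_const _)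
    · convert (Real.hasSum_sin t).smul_const J using 2 with k
      rw [smul_pow, hodd, smul_smul, smul_smul]
      congr 1
      ring
  rw [NormedSpace.exp_eq_tsum ℝ]
  beta_reduce
  rw [hsum.tsum_eq]
  module

theorem exp_pi_div_two_mul_smul_eq {S T : A} {q : ℝ} (hq : q ≠ 0)
    (hSS : S * S = q • T - q ^ 2 • 1) (hST : S * T = 0) :
    NormedSpace.exp ((Real.pi / (2 * q)) • S) = q⁻¹ • (S + T) := by
  set J := q⁻¹ • S
  have hJ2 : J ^ 2 = q⁻¹ • T - 1 := by
    rw [sq, smul_mul_smul_comm, hSS, smul_sub, smul_smul, smul_smul]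
    field_simp
    module
  have hJ3 : J ^ 3 = -J := by
    rw [pow_succ', hJ2, mul_sub, mul_one, smul_mul_smul_comm, hST, smul_zero, zero_sub]
  rw [show (Real.pi / (2 * q)) • S = (Real.pi / 2) • J by rw [smul_smul]; congr 1; field_simp,
    exp_smul_of_pow_three_eq_neg hJ3, Real.sin_pi_div_two, Real.cos_pi_div_two, hJ2]
  module

end Exponential

namespace SuzukiA

open scoped Classical
open Fq

variable {n : ℕ} {θ : Fq n ≃+* Fq n}

theorem inv_def_s19 (g : SuzukiA n θ) : g⁻¹ = ⟨g.a, g.b + g.a * θ g.a⟩ := rfl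

theorem mul_self (g : SuzukiA n θ) : g * g = ⟨0, g.a * θ g.a⟩ := by
  ext <;> simp [mul_def, CharTwo.add_self_eq_zero]

theorem mk_zero_eq_one_iff (b : Fq n) : (⟨0, b⟩ : SuzukiA n θ) = 1 ↔ b = 0 := by
  simp [SuzukiA.ext_iff]

theorem orderOf_eq_four_iff (g : SuzukiA n θ) : orderOf g = 4 ↔ g.a ≠ 0 := by
  have hsq : g ^ 2 = ⟨0, g.a * θ g.a⟩ := by rw [sq, mul_self]
  constructor
  · intro h ha
    have h2 : orderOf g ∣ 2 := orderOf_dvd_of_pow_eq_one (by simp [hsq, ha, mk_zero_eq_one_iff])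
    rw [h] at h2
    omega
  · intro ha
    refine orderOf_eq_prime_pow (p := 2) (n := 1) ?_ ?_
    · simpa [hsq, mk_zero_eq_one_iff] using ha
    · rw [show 2 ^ (1 + 1) = 2 * 2 by rfl, pow_mul, hsq, sq, mul_self]
      ext <;> simp

theorem mul_mul_inv (c e a b : Fq n) :
    (⟨c, e⟩ * ⟨a, b⟩ * (⟨c, e⟩ : SuzukiA n θ)⁻¹) = ⟨a, b + (c * θ a + a * θ c)⟩ := by
  ext
  · simp [mul_def, inv_def_s19, add_comm c, add_assoc, CharTwo.add_self_eq_zero]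
  · simp only [mul_def, inv_def_s19]
    linear_combination (e + c * θ c) * CharTwo.two_eq_zero (R := Fq n)

theorem isConj_mk_of_trace_eq_zero (hθ : ∀ σ : Fq n ≃+* Fq n, σ ∈ Subgroup.zpowers θ)
    (hodd : Odd n) {a b b' : Fq n} (ha : a ≠ 0) (h : trace θ ((b + b') / (a * θ a)) = 0) :
    IsConj (⟨a, b⟩ : SuzukiA n θ) ⟨a, b'⟩ := by
  obtain ⟨t, ht⟩ := exists_add_apply_eq hθ hodd h
  refine isConj_iff.mpr ⟨⟨t * a, 0⟩, ?_⟩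
  have hθa : θ a ≠ 0 := by simpa using ha
  rw [mul_mul_inv, SuzukiA.mk.injEq, map_mul]
  refine ⟨rfl, ?_⟩
  rw [eq_div_iff (mul_ne_zero ha hθa)] at ht
  linear_combination ht + b * CharTwo.two_eq_zero (R := Fq n)

theorem sum_eq_sum_sum {M : Type*} [AddCommMonoid M] (φ : SuzukiA n θ → M) :
    ∑ g, φ g = ∑ a, ∑ b, φ ⟨a, b⟩ := by
  rw [← Fintype.sum_prod_type']
  exact Fintype.sum_equiv ⟨fun g => (g.a, g.b), fun p => ⟨p.1, p.2⟩, fun _ => rfl, fun _ => rfl⟩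
    _ _ fun _ => rfl

/-- The indicator of the subgroup `{(0, b)}`, which is the centre of `A(n, θ)` for `n > 1`. -/
def indicatorAZero (g : SuzukiA n θ) : ℝ := if g.a = 0 then 1 else 0

section Convolution

variable {C : Finset (SuzukiA n θ)}

theorem signedIndicator_of_a_eq_zero (hord : ∀ g ∈ C, orderOf g = 4) {g : SuzukiA n θ}
    (hg : g.a = 0) : signedIndicator C g = 0 :=
  signedIndicator_eq_zero (fun h => (orderOf_eq_four_iff g).mp (hord g h) hg)
    (fun h => (orderOf_eq_four_iff g⁻¹).mp (hord _ h) hg)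

/-- The class of `(a, b)` is that of `(a, 0)` or of its inverse `(a, a θ a)`, according to the
trace of `b / (a θ a)`. -/
theorem signedIndicator_mk (hθ : ∀ σ : Fq n ≃+* Fq n, σ ∈ Subgroup.zpowers θ) (hodd : Odd n)
    (hconj : ∀ g ∈ C, ∀ h, IsConj g h → h ∈ C)
    (hpair : ∀ g : SuzukiA n θ, orderOf g = 4 → (g ∈ C ↔ g⁻¹ ∉ C))
    {a : Fq n} (ha : a ≠ 0) (b : Fq n) :
    signedIndicator C ⟨a, b⟩ = signedIndicator C ⟨a, 0⟩ * traceChar θ (b / (a * θ a)) := by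
  have hmem : ∀ {g h : SuzukiA n θ}, IsConj g h → (g ∈ C ↔ h ∈ C) := fun h =>
    ⟨fun hg => hconj _ hg _ h, fun hh => hconj _ hh _ h.symm⟩
  have hord : ∀ b, orderOf (⟨a, b⟩ : SuzukiA n θ) = 4 := fun _ => (orderOf_eq_four_iff _).mpr ha
  have hθa : θ a ≠ 0 := by simpa using ha
  rw [signedIndicator_of_orderOf_eq_four hpair (hord b),
    signedIndicator_of_orderOf_eq_four hpair (hord 0)]
  rcases trace_eq_zero_or_one hθ hodd.pos.ne' (b / (a * θ a)) with h | h
  · have hab := hmem (isConj_mk_of_trace_eq_zero hθ hodd ha (b := 0) (b' := b) (by rwa [zero_add]))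
    rw [traceChar, if_pos h, mul_one]
    simp only [hab]
  · have hab := hmem (isConj_mk_of_trace_eq_zero hθ hodd ha (b := a * θ a) (b' := b)
      (by rw [add_div, div_self (mul_ne_zero ha hθa), map_add, trace_one hodd, h,
        CharTwo.add_self_eq_zero]))
    have hinv : (⟨a, 0⟩ : SuzukiA n θ)⁻¹ = ⟨a, a * θ a⟩ := by simp [inv_def_s19]
    have := hpair _ (hord 0)
    rw [hinv] at this
    rw [traceChar, h, if_neg one_ne_zero]
    simp only [← hab]
    by_cases h0 : (⟨a, 0⟩ : SuzukiA n θ) ∈ C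
    · rw [if_pos h0, if_neg (this.mp h0)]
      norm_num
    · rw [if_neg h0, if_pos (not_not.mp (mt this.mpr h0))]
      norm_num

theorem sum_signedIndicator_mk (hθ : ∀ σ : Fq n ≃+* Fq n, σ ∈ Subgroup.zpowers θ) (hodd : Odd n)
    (hord : ∀ g ∈ C, orderOf g = 4) (hconj : ∀ g ∈ C, ∀ h, IsConj g h → h ∈ C)
    (hpair : ∀ g : SuzukiA n θ, orderOf g = 4 → (g ∈ C ↔ g⁻¹ ∉ C)) (a : Fq n) :
    ∑ b, signedIndicator C ⟨a, b⟩ = 0 := by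
  rcases eq_or_ne a 0 with rfl | ha
  · exact Finset.sum_eq_zero fun b _ => signedIndicator_of_a_eq_zero hord rfl
  · have hN : (a * θ a)⁻¹ ≠ 0 := inv_ne_zero (mul_ne_zero ha (by simpa using ha))
    calc ∑ b, signedIndicator C ⟨a, b⟩
        = signedIndicator C ⟨a, 0⟩ * ∑ b, traceChar θ (b * (a * θ a)⁻¹) := by
          rw [Finset.mul_sum]
          exact Finset.sum_congr rfl fun b _ => by
            rw [signedIndicator_mk hθ hodd hconj hpair ha b, div_eq_mul_inv]
      _ = 0 := by rw [sum_traceChar_mul hθ hodd, if_neg hN, mul_zero]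

theorem signedIndicator_mk_mul_signedIndicator_mk
    (hθ : ∀ σ : Fq n ≃+* Fq n, σ ∈ Subgroup.zpowers θ) (hodd : Odd n)
    (hconj : ∀ g ∈ C, ∀ h, IsConj g h → h ∈ C)
    (hpair : ∀ g : SuzukiA n θ, orderOf g = 4 → (g ∈ C ↔ g⁻¹ ∉ C))
    {c c' : Fq n} (hc : c ≠ 0) (hc' : c' ≠ 0) (d r : Fq n) :
    signedIndicator C ⟨c, d⟩ * signedIndicator C ⟨c', d + r⟩ =
      signedIndicator C ⟨c, 0⟩ * signedIndicator C ⟨c', 0⟩ * traceChar θ (r / (c' * θ c')) *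
        traceChar θ (d * ((c * θ c)⁻¹ + (c' * θ c')⁻¹)) := by
  rw [signedIndicator_mk hθ hodd hconj hpair hc d,
    signedIndicator_mk hθ hodd hconj hpair hc' (d + r),
    add_div, mul_add, traceChar_add hθ hodd.pos.ne', traceChar_add hθ hodd.pos.ne',
    ← div_eq_mul_inv, ← div_eq_mul_inv]
  ring

theorem sum_signedIndicator_mk_mul_signedIndicator
    (hθ : ∀ σ : Fq n ≃+* Fq n, σ ∈ Subgroup.zpowers θ) (hodd : Odd n)
    (hord : ∀ g ∈ C, orderOf g = 4) (hconj : ∀ g ∈ C, ∀ h, IsConj g h → h ∈ C)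
    (hpair : ∀ g : SuzukiA n θ, orderOf g = 4 → (g ∈ C ↔ g⁻¹ ∉ C)) (α β c : Fq n) :
    ∑ d, signedIndicator C ⟨c, d⟩ * signedIndicator C (⟨α, β⟩ * (⟨c, d⟩ : SuzukiA n θ)⁻¹) =
      if α = 0 ∧ c ≠ 0 then -(Fintype.card (Fq n) : ℝ) * traceChar θ (β / (c * θ c)) else 0 := by
  have hprod : ∀ d, (⟨α, β⟩ * (⟨c, d⟩ : SuzukiA n θ)⁻¹) = ⟨α + c, d + (β + c * θ c + α * θ c)⟩ := by
    intro d
    ext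
    · rfl
    · simp only [mul_def, inv_def_s19]
      ring
  simp_rw [hprod]
  rcases eq_or_ne c 0 with rfl | hc
  · simp [signedIndicator_of_a_eq_zero hord]
  rcases eq_or_ne (α + c) 0 with hαc | hαc
  · have hα : α ≠ 0 := by
      rintro rfl
      exact hc (by simpa using hαc)
    have hz : ∀ b, signedIndicator C (⟨α + c, b⟩ : SuzukiA n θ) = 0 := fun _ =>
      signedIndicator_of_a_eq_zero hord hαc
    simp [hα, hz]
  -- A character sum in `d`, which vanishes unless `c θ c = (α + c) θ (α + c)`, i.e. `α = 0`.
  simp_rw [signedIndicator_mk_mul_signedIndicator_mk hθ hodd hconj hpair hc hαc, ← Finset.mul_sum,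
    sum_traceChar_mul hθ hodd]
  have hs : (c * θ c)⁻¹ + ((α + c) * θ (α + c))⁻¹ = 0 ↔ α = 0 := by
    rw [CharTwo.add_eq_zero, inv_inj]
    exact ⟨fun h => eq_zero_of_mul_apply_add_eq hodd h.symm, by rintro rfl; rw [zero_add]⟩
  rcases eq_or_ne α 0 with rfl | hα
  · have hc4 : orderOf (⟨c, 0⟩ : SuzukiA n θ) = 4 := (orderOf_eq_four_iff _).mpr hc
    have hN : c * θ c ≠ 0 := mul_ne_zero hc (by simpa using hc)
    rw [if_pos (hs.mpr rfl), if_pos ⟨rfl, hc⟩]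
    simp only [zero_add, zero_mul, add_zero]
    rw [signedIndicator_mul_self hpair hc4, add_div, div_self hN,
      traceChar_add hθ hodd.pos.ne', traceChar_one hodd]
    ring
  · rw [if_neg (mt hs.mp hα), if_neg (fun h => hα h.1), mul_zero]

theorem sum_signedIndicator_mul_signedIndicator_mul_inv
    (hθ : ∀ σ : Fq n ≃+* Fq n, σ ∈ Subgroup.zpowers θ) (hodd : Odd n)
    (hord : ∀ g ∈ C, orderOf g = 4) (hconj : ∀ g ∈ C, ∀ h, IsConj g h → h ∈ C)
    (hpair : ∀ g : SuzukiA n θ, orderOf g = 4 → (g ∈ C ↔ g⁻¹ ∉ C)) (g : SuzukiA n θ) :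
    ∑ x, signedIndicator C x * signedIndicator C (g * x⁻¹) =
      (Fintype.card (Fq n) : ℝ) * indicatorAZero g -
        (Fintype.card (Fq n) : ℝ) ^ 2 * (if g = 1 then 1 else 0) := by
  obtain ⟨α, β⟩ := g
  rw [sum_eq_sum_sum]
  simp_rw [sum_signedIndicator_mk_mul_signedIndicator hθ hodd hord hconj hpair α β]
  rcases eq_or_ne α 0 with rfl | hα
  · have hbij : Function.Bijective fun c : Fq n => (c * θ c)⁻¹ :=
      Finite.injective_iff_bijective.mp fun c c' h => mul_apply_injective hodd (inv_injective h)
    have hsum : ∑ c, traceChar θ (β / (c * θ c)) = ∑ y, traceChar θ (y * β) :=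
      Fintype.sum_bijective _ hbij _ _ fun c => by rw [div_eq_mul_inv, mul_comm]
    simp only [true_and, indicatorAZero, if_true, mk_zero_eq_one_iff]
    rw [← Finset.sum_filter, Finset.filter_ne', Finset.sum_erase_eq_sub (Finset.mem_univ 0),
      ← Finset.mul_sum, hsum, sum_traceChar_mul hθ hodd]
    simp only [zero_mul, div_zero, traceChar_zero]
    split_ifs <;> ring
  · simp [hα, indicatorAZero, SuzukiA.ext_iff]

theorem sum_signedIndicator_mul_indicatorAZero_mul_inv
    (hθ : ∀ σ : Fq n ≃+* Fq n, σ ∈ Subgroup.zpowers θ) (hodd : Odd n)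
    (hord : ∀ g ∈ C, orderOf g = 4) (hconj : ∀ g ∈ C, ∀ h, IsConj g h → h ∈ C)
    (hpair : ∀ g : SuzukiA n θ, orderOf g = 4 → (g ∈ C ↔ g⁻¹ ∉ C)) (g : SuzukiA n θ) :
    ∑ x, signedIndicator C x * indicatorAZero (g * x⁻¹) = 0 := by
  obtain ⟨α, β⟩ := g
  rw [sum_eq_sum_sum]
  refine Finset.sum_eq_zero fun c _ => ?_
  have hind : ∀ d, indicatorAZero (⟨α, β⟩ * (⟨c, d⟩ : SuzukiA n θ)⁻¹) =
      indicatorAZero (⟨α + c, 0⟩ : SuzukiA n θ) := fun _ => rfl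
  simp_rw [hind, ← Finset.sum_mul, sum_signedIndicator_mk hθ hodd hord hconj hpair, zero_mul]

theorem skewAdj_mul_self (hθ : ∀ σ : Fq n ≃+* Fq n, σ ∈ Subgroup.zpowers θ) (hodd : Odd n)
    (hord : ∀ g ∈ C, orderOf g = 4) (hconj : ∀ g ∈ C, ∀ h, IsConj g h → h ∈ C)
    (hpair : ∀ g : SuzukiA n θ, orderOf g = 4 → (g ∈ C ↔ g⁻¹ ∉ C)) :
    skewAdj (SuzukiA n θ) C * skewAdj (SuzukiA n θ) C =
      (Fintype.card (Fq n) : ℝ) • cayleyMatrix indicatorAZero -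
        (Fintype.card (Fq n) : ℝ) ^ 2 • 1 := by
  rw [skewAdj_eq_cayleyMatrix, cayleyMatrix_mul, ← cayleyMatrix_ite_eq_one]
  ext u v
  exact sum_signedIndicator_mul_signedIndicator_mul_inv hθ hodd hord hconj hpair (v * u⁻¹)

theorem skewAdj_mul_cayleyMatrix_indicatorAZero
    (hθ : ∀ σ : Fq n ≃+* Fq n, σ ∈ Subgroup.zpowers θ) (hodd : Odd n)
    (hord : ∀ g ∈ C, orderOf g = 4) (hconj : ∀ g ∈ C, ∀ h, IsConj g h → h ∈ C)
    (hpair : ∀ g : SuzukiA n θ, orderOf g = 4 → (g ∈ C ↔ g⁻¹ ∉ C)) :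
    skewAdj (SuzukiA n θ) C * cayleyMatrix indicatorAZero = 0 := by
  rw [skewAdj_eq_cayleyMatrix, cayleyMatrix_mul]
  ext u v
  exact sum_signedIndicator_mul_indicatorAZero_mul_inv hθ hodd hord hconj hpair (v * u⁻¹)

theorem abs_signedIndicator_add_indicatorAZero (hord : ∀ g ∈ C, orderOf g = 4)
    (hpair : ∀ g : SuzukiA n θ, orderOf g = 4 → (g ∈ C ↔ g⁻¹ ∉ C)) (g : SuzukiA n θ) :
    |signedIndicator C g + indicatorAZero g| = 1 := by
  rcases eq_or_ne g.a 0 with ha | ha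
  · simp [signedIndicator_of_a_eq_zero hord ha, indicatorAZero, ha]
  · rw [signedIndicator_of_orderOf_eq_four hpair ((orderOf_eq_four_iff g).mpr ha), indicatorAZero,
      if_neg ha, add_zero]
    split_ifs <;> simp

end Convolution

end SuzukiA

open SuzukiA in
theorem stmt19_general (n m : ℕ) (hm : n = 2 * m + 1) (θ : Fq n ≃+* Fq n)
    (hθ : ∀ σ : Fq n ≃+* Fq n, σ ∈ Subgroup.zpowers θ)
    (C : Finset (SuzukiA n θ))
    (hord : ∀ g ∈ C, orderOf g = 4)
    (hconj : ∀ g ∈ C, ∀ h, IsConj g h → h ∈ C)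
    (hpair : ∀ g : SuzukiA n θ, orderOf g = 4 → (g ∈ C ↔ g⁻¹ ∉ C)) :
    ∀ u v : SuzukiA n θ,
      |NormedSpace.exp ((Real.pi / 2 ^ (n + 1)) • skewAdj (SuzukiA n θ) C) u v| =
        ((2 : ℝ) ^ n)⁻¹ := by
  intro u v
  have hodd : Odd n := ⟨m, hm⟩
  have hq : (Fintype.card (Fq n) : ℝ) = 2 ^ n := by
    rw [Fintype.card_eq_nat_card, GaloisField.card 2 n hodd.pos.ne', Nat.cast_pow, Nat.cast_ofNat]
  rw [show Real.pi / 2 ^ (n + 1) = Real.pi / (2 * (Fintype.card (Fq n) : ℝ)) by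
      rw [hq, pow_succ, mul_comm],
    exp_pi_div_two_mul_smul_eq (by positivity) (skewAdj_mul_self hθ hodd hord hconj hpair)
      (skewAdj_mul_cayleyMatrix_indicatorAZero hθ hodd hord hconj hpair),
    Matrix.smul_apply, smul_eq_mul, abs_mul, skewAdj_eq_cayleyMatrix]
  change _ * |signedIndicator C (v * u⁻¹) + indicatorAZero (v * u⁻¹)| = _
  rw [abs_signedIndicator_add_indicatorAZero hord hpair, mul_one, abs_inv, hq,
    abs_of_pos (by positivity)]

open SuzukiA in
theorem stmt19 (n m : ℕ) (hm : n = 2 * m + 1) (hn : 1 < n) (θ : Fq n ≃+* Fq n)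
    (hθ : ∀ σ : Fq n ≃+* Fq n, σ ∈ Subgroup.zpowers θ)
    (C : Finset (SuzukiA n θ))
    (hord : ∀ g ∈ C, orderOf g = 4)
    (hconj : ∀ g ∈ C, ∀ h, IsConj g h → h ∈ C)
    (hpair : ∀ g : SuzukiA n θ, orderOf g = 4 → (g ∈ C ↔ g⁻¹ ∉ C)) :
    ∀ u v : SuzukiA n θ,
      |NormedSpace.exp ((Real.pi / 2 ^ (n + 1)) • skewAdj (SuzukiA n θ) C) u v| =
        ((2 : ℝ) ^ n)⁻¹ :=
  stmt19_general n m hm θ hθ C hord hconj hpair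
end
end
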